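/- arXiv:2112.14937 — 2 statements merged into one kernel-verified Lean document; each statement's English description precedes it below -/
import Mathlib

section
/- Let K be a field of characteristic 0 and f ∈ K[z] a polynomial of degree d ≥ 2 whose leading coefficient ℓ has a (d−1)-th root in K. Then there exists a formal Laurent series φ(z) = a₁z + a₀ + a₋₁/z + ⋯ ∈ z·K[[1/z]] with a₁ ≠ 0 satisfying φ(f(z)) = φ(z)^d. -/
open Polynomial

noncomputable section

/-- The element `z = X⁻¹` of the field of formal Laurent series `K((X))`,
where the variable `X` is interpreted as `1/z`; thus `K((X)) = K((1/z))`. -/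
def Zvar (K : Type*) [Field K] : LaurentSeries K := HahnSeries.single (-1) 1

/-- Composition `φ(u)`: the Laurent series `φ ∈ K((1/z))` is viewed as the function
`z ↦ ∑ₙ φ.coeff n · z^{-n}` (so that `φ = lcomp φ (Zvar K)`), and is evaluated at `u`.
The sum converges in the `X`-adic topology whenever `u` is a polynomial in `z` of
positive degree. -/
def lcomp {K : Type*} [Field K] (φ u : LaurentSeries K) : LaurentSeries K :=
  ∑' n : ℤ, φ.coeff n • u ^ (-n)

/-- `φ` is a Böttcher coordinate of the degree-`d` polynomial `f`: a formal Laurent series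
`φ(z) = a₁ z + a₀ + a₋₁/z + ⋯ ∈ z·K[[1/z]]` with `a₁ ≠ 0` such that `φ(f(z)) = φ(z)^d`. -/
def IsBottcher {K : Type*} [Field K] (f : Polynomial K) (d : ℕ) (φ : LaurentSeries K) : Prop :=
  (∀ n : ℤ, n < -1 → φ.coeff n = 0) ∧ φ.coeff (-1) ≠ 0 ∧
    lcomp φ (aeval (Zvar K) f) = φ ^ d

/-!
Put `X = 1/z`, so that `u = f(z)` is a Laurent series in `X` of valuation `exp d` whose lowest
coefficient `ℓ` is that of `X⁻ᵈ`, and write `φ = ∑ₙ aₙ Xⁿ` with `a₋₁ = t`. In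
`φ(u) = ∑ₙ aₙ u⁻ⁿ = φᵈ` the coefficients of `X⁻ᵈ` give `t ℓ = tᵈ`, which the root `t` of `ℓ`
solves. As `u⁻ⁿ` only starts in degree `d n` and `d ≥ 2`, the coefficient `aⱼ` enters degree
`j - d + 1` of the equation only through `φᵈ`, linearly with factor `d tᵈ⁻¹ = d ℓ ≠ 0`; so `aⱼ`
is determined by `a₋₁, …, aⱼ₋₁`. The truncations obtained this way converge `X`-adically to a
solution.
-/

open HahnSeries WithZero Filter

namespace HahnSeries

variable {Γ R : Type*} [AddCommMonoid Γ] [LinearOrder Γ] [IsOrderedCancelAddMonoid Γ]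

theorem leadingCoeff_pow [Semiring R] [NoZeroDivisors R] (x : R⟦Γ⟧) (n : ℕ) :
    (x ^ n).leadingCoeff = x.leadingCoeff ^ n := by
  induction n with
  | zero => simp
  | succ n ih => rw [pow_succ, leadingCoeff_mul, ih, pow_succ]

theorem coeff_geom_sum₂_of_order_eq [CommSemiring R] [NoZeroDivisors R] {x y : R⟦Γ⟧} {A : Γ}
    (hx : x.order = A) (hy : y.order = A) (hxy : x.leadingCoeff = y.leadingCoeff) (d : ℕ) :
    (∑ i ∈ Finset.range d, x ^ i * y ^ (d - 1 - i)).coeff ((d - 1) • A) =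
      d * x.leadingCoeff ^ (d - 1) := by
  rw [coeff_sum, Finset.sum_congr rfl (g := fun _ ↦ x.leadingCoeff ^ (d - 1)), Finset.sum_const,
    Finset.card_range, nsmul_eq_mul]
  intro i hi
  set m := d - 1 - i
  have hdi : d - 1 = i + m := by have := Finset.mem_range.mp hi; omega
  have horder : (d - 1) • A = (x ^ i).order + (y ^ m).order := by
    rw [order_pow, order_pow, hx, hy, hdi, add_nsmul]
  rw [horder, coeff_mul_order_add_order, leadingCoeff_pow, leadingCoeff_pow, hxy, hdi,
    _root_.pow_add]

end HahnSeries

namespace LaurentSeries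

variable {K : Type*} [Field K]

theorem valuation_eq_exp_neg_iff {x : K⸨X⸩} {A : ℤ} :
    Valued.v x = exp (-A) ↔ (∀ k < A, x.coeff k = 0) ∧ x.coeff A ≠ 0 := by
  have hnext : Valued.v x ≤ exp (-(A + 1)) ↔ (∀ k < A, x.coeff k = 0) ∧ x.coeff A = 0 := by
    rw [valuation_le_iff_coeff_lt_eq_zero]
    refine ⟨fun h ↦ ⟨fun k hk ↦ h k (by omega), h A (by omega)⟩, fun h k hk ↦ ?_⟩
    rcases lt_or_eq_of_le (Int.lt_add_one_iff.mp hk) with hk | rfl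
    exacts [h.1 k hk, h.2]
  rw [← valuation_le_iff_coeff_lt_eq_zero]
  constructor
  · intro h
    refine ⟨h.le, fun hA ↦ ?_⟩
    have := hnext.mpr ⟨(valuation_le_iff_coeff_lt_eq_zero K).mp h.le, hA⟩
    rw [h, exp_le_exp] at this
    omega
  · rintro ⟨hle, hA⟩
    refine le_antisymm hle (not_lt.mp fun hlt ↦ hA (hnext.mp ?_).2)
    have h0 : Valued.v x ≠ 0 := fun h0 ↦ hA (by simp_all)
    rw [← exp_log h0, exp_lt_exp] at hlt
    rw [← exp_log h0, exp_le_exp]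
    omega

theorem order_eq_of_valuation_eq {x : K⸨X⸩} {A : ℤ} (h : Valued.v x = exp (-A)) :
    x.order = A := by
  obtain ⟨hlow, hA⟩ := valuation_eq_exp_neg_iff.mp h
  have hx : x ≠ 0 := by rintro rfl; exact hA rfl
  exact le_antisymm (order_le_of_coeff_ne_zero hA) ((le_order_iff_forall hx).mpr hlow)

theorem valuation_smul_le {x : K⸨X⸩} {D : ℤ} (c : K) (hx : Valued.v x ≤ exp (-D)) :
    Valued.v (c • x) ≤ exp (-D) :=
  (valuation_le_iff_coeff_lt_eq_zero K).mpr fun k hk ↦ by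
    rw [HahnSeries.coeff_smul, (valuation_le_iff_coeff_lt_eq_zero K).mp hx k hk, smul_zero]

theorem valuation_single_le (j : ℤ) (c : K) : Valued.v (single j c : K⸨X⸩) ≤ exp (-j) :=
  (valuation_le_iff_coeff_lt_eq_zero K).mpr fun _ hk ↦ coeff_single_of_ne hk.ne

theorem valuation_pow_sub_pow_le {x y : K⸨X⸩} {a b : ℤ} (hx : Valued.v x ≤ exp a)
    (hy : Valued.v y ≤ exp a) (hxy : Valued.v (x - y) ≤ exp b) (d : ℕ) :
    Valued.v (x ^ d - y ^ d) ≤ exp (b + (d - 1 : ℕ) * a) := by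
  rw [← geom_sum₂_mul, map_mul, exp_add, mul_comm (exp b)]
  refine mul_le_mul' (Valuation.map_sum_le _ fun i hi ↦ ?_) hxy
  have hdi : i + (d - 1 - i) = d - 1 := by have := Finset.mem_range.mp hi; omega
  calc Valued.v (x ^ i * y ^ (d - 1 - i)) ≤ exp a ^ i * exp a ^ (d - 1 - i) := by
        rw [map_mul, map_pow, map_pow]; gcongr
    _ = exp ((d - 1 : ℕ) * a) := by rw [← _root_.pow_add, hdi, ← exp_nsmul, nsmul_eq_mul]

theorem hasSum_of_forall_valuation_sub_le {ι : Type*} {g : ι → K⸨X⸩} {s : K⸨X⸩}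
    (h : ∀ D : ℤ, ∀ᶠ F : Finset ι in atTop, Valued.v (∑ i ∈ F, g i - s) ≤ exp (-D)) :
    HasSum g s := by
  rw [HasSum, SummationFilter.unconditional_filter]
  refine fun U hU ↦ Filter.mem_map.mpr ?_
  obtain ⟨γ, hγ⟩ := Valued.mem_nhds.mp hU
  set D : ℤ := 1 - log (MonoidWithZeroHom.ValueGroup₀.embedding γ.1)
  filter_upwards [h D] with F hF
  apply hγ
  rw [Set.mem_ofPred_eq, Valued.v.restrict_lt_iff_lt_embedding]
  refine lt_of_le_of_lt hF ?_
  rw [← lt_log_iff_exp_lt (by simp)]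
  omega

end LaurentSeries

open LaurentSeries

namespace Bottcher

variable {K : Type*} [Field K] {u : K⸨X⸩} {d : ℕ} {t : K}

def lcompSum (φ u : K⸨X⸩) (F : Finset ℤ) : K⸨X⸩ := ∑ n ∈ F, φ.coeff n • u ^ (-n)

theorem valuation_sum_smul_zpow_neg_le (hu : Valued.v u = exp (d : ℤ)) {j : ℤ} (F : Finset ℤ)
    (g : ℤ → K) (hg : ∀ n ∈ F, g n ≠ 0 → j ≤ n) :
    Valued.v (∑ n ∈ F, g n • u ^ (-n)) ≤ exp (-(d * j)) := by
  refine Valuation.map_sum_le _ fun n hn ↦ ?_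
  by_cases h0 : g n = 0
  · simp [h0]
  refine valuation_smul_le _ ?_
  rw [map_zpow₀, hu, ← exp_zsmul, exp_le_exp, smul_eq_mul]
  have := hg n hn h0
  nlinarith

theorem valuation_lcompSum_sub_lcompSum_le (hu : Valued.v u = exp (d : ℤ)) {j : ℤ}
    {φ ψ : K⸨X⸩} (h : Valued.v (φ - ψ) ≤ exp (-j)) (F : Finset ℤ) :
    Valued.v (lcompSum φ u F - lcompSum ψ u F) ≤ exp (-(d * j)) := by
  have hsub : lcompSum φ u F - lcompSum ψ u F = ∑ n ∈ F, (φ - ψ).coeff n • u ^ (-n) := by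
    simp only [lcompSum, ← Finset.sum_sub_distrib, HahnSeries.coeff_sub, sub_smul]
  rw [hsub]
  refine valuation_sum_smul_zpow_neg_le hu F _ fun n _ hn ↦ ?_
  by_contra! hlt
  exact hn ((valuation_le_iff_coeff_lt_eq_zero K).mp h n hlt)

theorem valuation_lcompSum_sub_lcompSum_of_subset_le (hu : Valued.v u = exp (d : ℤ)) {j : ℤ}
    {φ : K⸨X⸩} (hφ : Valued.v φ ≤ exp 1) {F F' : Finset ℤ}
    (hF' : Finset.Icc (-1) (j - 1) ⊆ F') (hF : F' ⊆ F) :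
    Valued.v (lcompSum φ u F - lcompSum φ u F') ≤ exp (-(d * j)) := by
  rw [lcompSum, lcompSum, ← Finset.sum_sdiff_eq_sub hF]
  refine valuation_sum_smul_zpow_neg_le hu _ _ fun n hn h0 ↦ ?_
  have hn1 : -1 ≤ n := by
    by_contra! hlt
    exact h0 ((valuation_le_iff_coeff_lt_eq_zero K (D := -1)).mp (by rwa [neg_neg]) n hlt)
  by_contra! hlt
  exact (Finset.mem_sdiff.mp hn).2 (hF' (Finset.mem_Icc.mpr ⟨hn1, by omega⟩))

-- The `c` such that adding `c Xʲ` to `ψ` kills the coefficient of `Xʲ⁻ᵈ⁺¹` in `ψ(u) - ψᵈ`.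
variable (u d) in
def nextCoeff (ψ : K⸨X⸩) (j : ℕ) : K :=
  (lcompSum ψ u (Finset.Icc (-1) (j - 1)) - ψ ^ d).coeff (j - d + 1) / (d * u.coeff (-(d : ℤ)))

variable (u d t) in
def approx : ℕ → K⸨X⸩
  | 0 => single (-1) t
  | j + 1 => approx j + single (j : ℤ) (nextCoeff u d (approx j) j)

variable (t) in
theorem valuation_approx_sub_approx_le {i j : ℕ} (hij : i ≤ j) :
    Valued.v (approx u d t j - approx u d t i) ≤ exp (-(i : ℤ)) := by
  induction j, hij using Nat.le_induction with
  | base => simp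
  | succ j hij ih =>
    rw [approx, add_sub_right_comm]
    refine Valuation.map_add_le _ ih ((valuation_single_le _ _).trans ?_)
    rw [exp_le_exp]
    omega

variable (t) in
theorem coeff_approx_eq_of_lt {i j : ℕ} {n : ℤ} (hi : n < i) (hj : n < j) :
    (approx u d t i).coeff n = (approx u d t j).coeff n := by
  rcases le_total i j with h | h
  · rw [eq_comm, ← sub_eq_zero, ← HahnSeries.coeff_sub]
    exact (valuation_le_iff_coeff_lt_eq_zero K).mp (valuation_approx_sub_approx_le t h) n hi
  · rw [← sub_eq_zero, ← HahnSeries.coeff_sub]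
    exact (valuation_le_iff_coeff_lt_eq_zero K).mp (valuation_approx_sub_approx_le t h) n hj

variable (t) in
theorem coeff_approx_of_neg (j : ℕ) {n : ℤ} (hn : n < 0) :
    (approx u d t j).coeff n = (single (-1) t : K⸨X⸩).coeff n :=
  coeff_approx_eq_of_lt (i := j) (j := 0) t (by omega) hn

theorem valuation_approx (ht : t ≠ 0) (j : ℕ) : Valued.v (approx u d t j) = exp 1 := by
  rw [← neg_neg (1 : ℤ), valuation_eq_exp_neg_iff]
  refine ⟨fun k hk ↦ ?_, ?_⟩ <;> rw [coeff_approx_of_neg t j (by omega)]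
  · exact coeff_single_of_ne hk.ne
  · rwa [coeff_single_same]

theorem order_approx (ht : t ≠ 0) (j : ℕ) : (approx u d t j).order = -1 :=
  order_eq_of_valuation_eq (by rw [neg_neg]; exact valuation_approx ht j)

theorem leadingCoeff_approx (ht : t ≠ 0) (j : ℕ) : (approx u d t j).leadingCoeff = t := by
  rw [leadingCoeff_eq, order_approx ht, coeff_approx_of_neg t j (by norm_num), coeff_single_same]

theorem coeff_approx_succ_pow_sub_pow (hd : 1 ≤ d) (ht : t ≠ 0) (j : ℕ) :
    (approx u d t (j + 1) ^ d - approx u d t j ^ d).coeff (j - d + 1) =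
      d * t ^ (d - 1) * nextCoeff u d (approx u d t j) j := by
  have hk : (j : ℤ) - d + 1 = (d - 1) • (-1) + j := by rw [nsmul_eq_mul]; push_cast [hd]; ring
  have hsucc : approx u d t (j + 1) - approx u d t j =
      single (j : ℤ) (nextCoeff u d (approx u d t j) j) :=
    add_sub_cancel_left _ _
  rw [← geom_sum₂_mul, hsucc, hk, coeff_mul_single_add,
    coeff_geom_sum₂_of_order_eq (order_approx ht _) (order_approx ht _)
      (by rw [leadingCoeff_approx ht, leadingCoeff_approx ht]), leadingCoeff_approx ht]

theorem valuation_smul_sub_single_pow_le (hd : 1 ≤ d) (hu : Valued.v u = exp (d : ℤ))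
    (ht : t ^ (d - 1) = u.coeff (-(d : ℤ))) :
    Valued.v (t • u - single (-1) t ^ d) ≤ exp (-(-(d : ℤ) + 1)) := by
  have hlow := (valuation_eq_exp_neg_iff.mp (show Valued.v u = exp (-(-(d : ℤ))) by
    rwa [neg_neg])).1
  rw [valuation_le_iff_coeff_lt_eq_zero, single_pow]
  intro k hk
  rw [HahnSeries.coeff_sub, HahnSeries.coeff_smul, smul_eq_mul]
  rcases lt_or_eq_of_le (show k ≤ -d by omega) with hk | rfl
  · rw [hlow k hk, coeff_single_of_ne (by simp; omega), mul_zero, sub_zero]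
  · rw [← ht, show d • (-1 : ℤ) = -d by simp, coeff_single_same, ← pow_succ',
      Nat.sub_add_cancel hd, sub_self]

theorem ne_zero_of_pow_eq_coeff (hd : 2 ≤ d) (hu : Valued.v u = exp (d : ℤ))
    (ht : t ^ (d - 1) = u.coeff (-(d : ℤ))) : t ≠ 0 := by
  rintro rfl
  refine (valuation_eq_exp_neg_iff.mp (show Valued.v u = exp (-(-(d : ℤ))) by rwa [neg_neg])).2 ?_
  rw [← ht, zero_pow (by omega)]

theorem valuation_lcompSum_approx_sub_pow_le (hd : 2 ≤ d) (hdK : (d : K) ≠ 0)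
    (hu : Valued.v u = exp (d : ℤ)) (ht : t ^ (d - 1) = u.coeff (-(d : ℤ))) (j : ℕ) :
    Valued.v (lcompSum (approx u d t j) u (Finset.Icc (-1) (j - 1)) - approx u d t j ^ d) ≤
      exp (-((j : ℤ) - d + 1)) := by
  induction j with
  | zero =>
    simpa [approx, lcompSum] using valuation_smul_sub_single_pow_le (by omega) hu ht
  | succ j ih =>
    have ht0 := ne_zero_of_pow_eq_coeff hd hu ht
    set ψ := approx u d t j
    set ψ' := approx u d t (j + 1)
    have hdiff : Valued.v (ψ' - ψ) ≤ exp (-(j : ℤ)) :=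
      valuation_approx_sub_approx_le t (Nat.le_succ j)
    have hlcomp : Valued.v (lcompSum ψ' u (Finset.Icc (-1) (j : ℤ)) -
        lcompSum ψ u (Finset.Icc (-1) (j - 1))) ≤ exp (-(d * (j : ℤ))) := by
      rw [← sub_add_sub_cancel _ (lcompSum ψ u (Finset.Icc (-1) (j : ℤ)))]
      exact Valuation.map_add_le _ (valuation_lcompSum_sub_lcompSum_le hu hdiff _)
        (valuation_lcompSum_sub_lcompSum_of_subset_le hu (valuation_approx ht0 j).le subset_rfl
          (Finset.Icc_subset_Icc le_rfl (by omega)))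
    have hpow : Valued.v (ψ' ^ d - ψ ^ d) ≤ exp (-((j : ℤ) - d + 1)) :=
      (valuation_pow_sub_pow_le (valuation_approx ht0 (j + 1)).le (valuation_approx ht0 j).le
        hdiff d).trans (by rw [exp_le_exp]; omega)
    rw [Nat.cast_succ, add_sub_cancel_right, valuation_le_iff_coeff_lt_eq_zero]
    intro n hn
    rw [show lcompSum ψ' u (Finset.Icc (-1) (j : ℤ)) - ψ' ^ d =
        (lcompSum ψ' u (Finset.Icc (-1) (j : ℤ)) - lcompSum ψ u (Finset.Icc (-1) (j - 1))) +
          (lcompSum ψ u (Finset.Icc (-1) (j - 1)) - ψ ^ d) - (ψ' ^ d - ψ ^ d) by abel,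
      HahnSeries.coeff_sub, HahnSeries.coeff_add,
      (valuation_le_iff_coeff_lt_eq_zero K).mp hlcomp n (by nlinarith), zero_add]
    rcases lt_or_eq_of_le (show n ≤ j - d + 1 by omega) with hn | rfl
    · rw [(valuation_le_iff_coeff_lt_eq_zero K).mp ih n hn,
        (valuation_le_iff_coeff_lt_eq_zero K).mp hpow n hn, sub_zero]
    · have hℓ : u.coeff (-(d : ℤ)) ≠ 0 := ht ▸ pow_ne_zero _ ht0
      rw [coeff_approx_succ_pow_sub_pow (by omega) ht0, nextCoeff, ht,
        mul_div_cancel₀ _ (mul_ne_zero hdK hℓ), sub_self]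

-- The coefficient of `Xⁿ` in `approx j` no longer changes once `j > n`.
variable (u d t) in
def limit : K⸨X⸩ :=
  ofSuppBddBelow (fun n ↦ (approx u d t (n + 1).toNat).coeff n) <| show BddBelow _ from
    ⟨-1, fun n hn ↦ not_lt.mp fun h ↦
      hn (by dsimp only; rw [coeff_approx_of_neg t _ (by omega), coeff_single_of_ne h.ne])⟩

variable (t) in
theorem valuation_limit_sub_approx_le (j : ℕ) :
    Valued.v (limit u d t - approx u d t j) ≤ exp (-(j : ℤ)) :=
  (valuation_le_iff_coeff_lt_eq_zero K).mpr fun n hn ↦ by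
    rw [HahnSeries.coeff_sub, limit, coeff_ofSuppBddBelow, sub_eq_zero]
    exact coeff_approx_eq_of_lt t (by omega) hn

variable (t) in
theorem valuation_limit_le : Valued.v (limit u d t) ≤ exp 1 := by
  rw [← sub_add_cancel (limit u d t) (approx u d t 0)]
  exact Valuation.map_add_le _
    ((valuation_limit_sub_approx_le t 0).trans (exp_le_exp.mpr (by simp)))
    ((valuation_single_le _ _).trans_eq (by rw [neg_neg]))

theorem coeff_limit_of_neg (n : ℤ) (hn : n < 0) :
    (limit u d t).coeff n = (single (-1) t : K⸨X⸩).coeff n := by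
  rw [← sub_eq_zero, ← HahnSeries.coeff_sub]
  exact (valuation_le_iff_coeff_lt_eq_zero K).mp (valuation_limit_sub_approx_le t 0) n hn

theorem valuation_lcompSum_limit_sub_pow_le (hd : 2 ≤ d) (hdK : (d : K) ≠ 0)
    (hu : Valued.v u = exp (d : ℤ)) (ht : t ^ (d - 1) = u.coeff (-(d : ℤ))) {j : ℕ}
    {F : Finset ℤ} (hF : Finset.Icc (-1) ((j : ℤ) - 1) ⊆ F) :
    Valued.v (lcompSum (limit u d t) u F - limit u d t ^ d) ≤ exp (-((j : ℤ) - d + 1)) := by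
  set φ := limit u d t
  set ψ := approx u d t j
  have hψ := (valuation_approx (ne_zero_of_pow_eq_coeff hd hu ht) j (u := u) (d := d)).le
  have hφψ : Valued.v (φ - ψ) ≤ exp (-(j : ℤ)) := valuation_limit_sub_approx_le t j
  have hweaken {x : K⸨X⸩} {e : ℤ} (hx : Valued.v x ≤ exp e) (he : e ≤ (d : ℤ) - 1 - j) :
      Valued.v x ≤ exp (-((j : ℤ) - d + 1)) :=
    hx.trans (exp_le_exp.mpr (by omega))
  rw [show lcompSum φ u F - φ ^ d = (lcompSum φ u F - lcompSum ψ u F) +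
      (lcompSum ψ u F - lcompSum ψ u (Finset.Icc (-1) (j - 1))) +
      (lcompSum ψ u (Finset.Icc (-1) (j - 1)) - ψ ^ d) - (φ ^ d - ψ ^ d) by abel]
  refine Valuation.map_sub_le _ (Valuation.map_add_le _ (Valuation.map_add_le _ ?_ ?_) ?_) ?_
  · exact hweaken (valuation_lcompSum_sub_lcompSum_le hu hφψ F) (by nlinarith)
  · exact hweaken (valuation_lcompSum_sub_lcompSum_of_subset_le hu hψ subset_rfl hF)
      (by nlinarith)
  · exact valuation_lcompSum_approx_sub_pow_le hd hdK hu ht j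
  · exact hweaken (valuation_pow_sub_pow_le (valuation_limit_le t) hψ hφψ d) (by omega)

end Bottcher

open Bottcher in
theorem LaurentSeries.exists_hasSum_coeff_smul_zpow_neg_eq_pow {K : Type*} [Field K] {u : K⸨X⸩}
    {d : ℕ} (hd : 2 ≤ d) (hdK : (d : K) ≠ 0) (hu : Valued.v u = exp (d : ℤ)) {t : K}
    (ht : t ^ (d - 1) = u.coeff (-(d : ℤ))) :
    ∃ φ : K⸨X⸩, (∀ n < -1, φ.coeff n = 0) ∧ φ.coeff (-1) = t ∧
      HasSum (fun n : ℤ ↦ φ.coeff n • u ^ (-n)) (φ ^ d) := by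
  refine ⟨limit u d t, fun n hn ↦ ?_, ?_, hasSum_of_forall_valuation_sub_le fun D ↦ ?_⟩
  · rw [coeff_limit_of_neg n (by omega), coeff_single_of_ne hn.ne]
  · rw [coeff_limit_of_neg (-1) (by norm_num), coeff_single_same]
  filter_upwards [eventually_ge_atTop (Finset.Icc (-1) (((D + d).toNat : ℤ) - 1))] with F hF
  exact (valuation_lcompSum_limit_sub_pow_le hd hdK hu ht hF).trans (exp_le_exp.mpr (by omega))

section PolynomialAtInfinity

variable {K : Type*} [Field K]

theorem coeff_aeval_Zvar_neg (f : K[X]) (n : ℕ) : (aeval (Zvar K) f).coeff (-n) = f.coeff n := by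
  induction f using Polynomial.induction_on' with
  | add p q hp hq => rw [map_add, HahnSeries.coeff_add, hp, hq, Polynomial.coeff_add]
  | monomial i c =>
    rw [aeval_monomial, Zvar, single_pow, HahnSeries.algebraMap_apply']
    simp [coeff_single, coeff_monomial, eq_comm]

theorem valuation_aeval_Zvar {f : K[X]} (hf : f ≠ 0) :
    Valued.v (aeval (Zvar K) f) = exp (f.natDegree : ℤ) := by
  rw [← neg_neg (f.natDegree : ℤ), valuation_eq_exp_neg_iff]
  refine ⟨fun k hk ↦ ?_, ?_⟩
  · obtain ⟨n, rfl⟩ : ∃ n : ℕ, k = -n := ⟨(-k).toNat, by omega⟩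
    rw [coeff_aeval_Zvar_neg]
    exact coeff_eq_zero_of_natDegree_lt (by omega)
  · rw [coeff_aeval_Zvar_neg]
    exact mt leadingCoeff_eq_zero.mp hf

end PolynomialAtInfinity

/-- Let `K` be a field of characteristic 0 and `f ∈ K[z]` of degree
`d ≥ 2` whose leading coefficient has a `(d−1)`-th root in `K`.  Then `f` admits a
Böttcher coordinate `φ(z) = a₁z + a₀ + ⋯ ∈ z·K[[1/z]]`, `a₁ ≠ 0`, `φ(f(z)) = φ(z)^d`. -/
theorem stmt2 (K : Type*) [Field K] [CharZero K] (f : Polynomial K) (d : ℕ)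
    (hd : 2 ≤ d) (hdeg : f.natDegree = d)
    (hroot : ∃ t : K, t ^ (d - 1) = f.leadingCoeff) :
    ∃ φ : LaurentSeries K, IsBottcher f d φ := by
  obtain ⟨t, ht⟩ := hroot
  have hf : f ≠ 0 := by rintro rfl; simp at hdeg; omega
  obtain ⟨φ, hlow, hφt, hsum⟩ := exists_hasSum_coeff_smul_zpow_neg_eq_pow hd
    (Nat.cast_ne_zero.mpr (by omega)) (hdeg ▸ valuation_aeval_Zvar hf)
    (by rw [coeff_aeval_Zvar_neg, ht, Polynomial.leadingCoeff, hdeg])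
  refine ⟨φ, hlow, hφt ▸ ?_, hsum.tsum_eq⟩
  rintro rfl
  exact hf (leadingCoeff_eq_zero.mp (by rw [← ht, zero_pow (by omega)]))
end
end

section
/- Let φ: X → X be a morphism of a variety X over an algebraically closed field, let x ∈ X, and let N ∈ ℕ. Suppose Z is the Zariski closure of {φ^k(x) : k ≥ N} and Z' is an irreducible component of Z of maximal dimension. Then Z' is preperiodic under φ, i.e., there exist integers m > m' ≥ 0 with φ^m(Z') = φ^{m'}(Z'). -/
/-!
If the orbit closure `Z` is finite, the images `φ^[m] '' Z'` are subsets of the finite,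
forward-invariant set `Z`, so two of them coincide. Otherwise some component of `Z` is infinite,
hence of positive dimension, so the component `Z'` of maximal dimension is infinite. The closures
of the orbit tails form a descending chain of closed sets, which stabilises at some `F` with
`closure (φ '' F) = F`; as `Z` is `F` plus finitely many orbit points, the infinite irreducible
`Z'` is a component of `F`. Taking the closure of the image permutes the finitely many
components of `F`, so the iterates of `Z'` repeat.
-/

open Set TopologicalSpace Function

theorem Set.SurjOn.mapsTo_of_finite {α : Type*} {f : α → α} {s : Set α} (hs : s.Finite)
    (h : SurjOn f s s) : MapsTo f s s :=
  mapsTo_iff_image_subset.mpr (eq_of_subset_of_ncard_le h (ncard_image_le hs) (hs.image f)).ge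

theorem Set.Finite.exists_lt_image_iterate_eq {α : Type*} {f : α → α} {s t : Set α}
    (hs : s.Finite) (hf : MapsTo f s s) (ht : t ⊆ s) :
    ∃ m' m, m' < m ∧ f^[m] '' t = f^[m'] '' t := by
  obtain ⟨m', m, hlt, h⟩ := hs.finite_subsets.exists_lt_map_eq_of_forall_mem
    (f := fun n => f^[n] '' t) fun n => image_subset_iff.mpr (ht.trans (hf.iterate n))
  exact ⟨m', m, hlt, h.symm⟩

theorem closure_image_iterate {X : Type*} [TopologicalSpace X] {φ : X → X} (hφ : Continuous φ)
    (s : Set X) (m : ℕ) :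
    closure (φ^[m] '' s) = (fun t => closure (φ '' t))^[m] (closure s) := by
  induction m with
  | zero => simp
  | succ m ih =>
    rw [iterate_succ_apply', ← ih, closure_image_closure hφ, ← image_comp, ← iterate_succ']

section IrreducibleComponentsOf

variable {X : Type*} [TopologicalSpace X]

def irreducibleComponentsOf (F : Set X) : Set (Set X) :=
  {C | Maximal (fun W => IsIrreducible W ∧ W ⊆ F) C}

theorem mem_irreducibleComponentsOf_iff {F C : Set X} :
    C ∈ irreducibleComponentsOf F ↔
      IsIrreducible C ∧ C ⊆ F ∧ ∀ W, IsIrreducible W → W ⊆ F → C ⊆ W → W = C := by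
  simp only [irreducibleComponentsOf, mem_ofPred_eq, Maximal, and_assoc, and_imp]
  refine and_congr_right fun _ => and_congr_right fun _ =>
    forall_congr' fun W => forall₃_congr fun _ _ hCW => ?_
  exact ⟨fun h => h.antisymm hCW, fun h => h.le⟩

theorem mem_irreducibleComponentsOf_of_subset {F G C : Set X}
    (hC : C ∈ irreducibleComponentsOf G) (hCF : C ⊆ F) (hFG : F ⊆ G) :
    C ∈ irreducibleComponentsOf F :=
  have ⟨hCirr, _, hCmax⟩ := mem_irreducibleComponentsOf_iff.mp hC
  mem_irreducibleComponentsOf_iff.mpr ⟨hCirr, hCF, fun W hW hWF => hCmax W hW (hWF.trans hFG)⟩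

theorem isClosed_of_mem_irreducibleComponentsOf {F C : Set X} (hF : IsClosed F)
    (hC : C ∈ irreducibleComponentsOf F) : IsClosed C := by
  have hC' := mem_irreducibleComponentsOf_iff.mp hC
  rw [← hC'.2.2 _ hC'.1.closure (hF.closure_subset_iff.mpr hC'.2.1) subset_closure]
  exact isClosed_closure

theorem IsIrreducible.exists_subset_of_subset_sUnion {S : Set (Set X)} {W : Set X}
    (hW : IsIrreducible W) (hS : S.Finite) (hSc : ∀ C ∈ S, IsClosed C) (hWS : W ⊆ ⋃₀ S) :
    ∃ C ∈ S, W ⊆ C := by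
  lift S to Finset (Set X) using hS
  exact isIrreducible_iff_sUnion_isClosed.mp hW S hSc hWS

variable [NoetherianSpace X]

theorem IsIrreducible.exists_mem_irreducibleComponentsOf_subset {F W : Set X}
    (hF : IsClosed F) (hW : IsIrreducible W) (hWF : W ⊆ F) :
    ∃ C ∈ irreducibleComponentsOf F, W ⊆ C := by
  obtain ⟨S, hSfin, hSc, hSirr, rfl⟩ :=
    NoetherianSpace.exists_finite_set_isClosed_irreducible hF
  obtain ⟨D, hD, hWD⟩ := hW.exists_subset_of_subset_sUnion hSfin hSc hWF
  obtain ⟨C, ⟨hCS, hWC⟩, hCmax⟩ :=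
    (hSfin.subset (sep_subset S (W ⊆ ·))).exists_maximal ⟨D, hD, hWD⟩
  refine ⟨C, mem_irreducibleComponentsOf_iff.mpr
    ⟨hSirr C hCS, subset_sUnion_of_mem hCS, fun V hV hVF hCV => ?_⟩, hWC⟩
  obtain ⟨C', hC'S, hVC'⟩ := hV.exists_subset_of_subset_sUnion hSfin hSc hVF
  have hCC' : C ⊆ C' := hCV.trans hVC'
  exact hCV.antisymm' (hVC'.trans (hCmax ⟨hC'S, hWC.trans hCC'⟩ hCC'))

theorem finite_irreducibleComponentsOf {F : Set X} (hF : IsClosed F) :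
    (irreducibleComponentsOf F).Finite := by
  obtain ⟨S, hSfin, hSc, hSirr, rfl⟩ :=
    NoetherianSpace.exists_finite_set_isClosed_irreducible hF
  refine hSfin.subset fun C hC => ?_
  obtain ⟨hCirr, hCF, hCmax⟩ := mem_irreducibleComponentsOf_iff.mp hC
  obtain ⟨D, hD, hCD⟩ := hCirr.exists_subset_of_subset_sUnion hSfin hSc hCF
  rwa [← hCmax D (hSirr D hD) (subset_sUnion_of_mem hD) hCD]

theorem subset_sUnion_irreducibleComponentsOf {F : Set X} (hF : IsClosed F) :
    F ⊆ ⋃₀ irreducibleComponentsOf F := fun y hy => by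
  obtain ⟨C, hC, hyC⟩ := isIrreducible_singleton.exists_mem_irreducibleComponentsOf_subset hF
    (singleton_subset_iff.mpr hy)
  exact ⟨C, hC, hyC rfl⟩

theorem exists_infinite_mem_irreducibleComponentsOf {F : Set X} (hF : IsClosed F)
    (hinf : F.Infinite) : ∃ C ∈ irreducibleComponentsOf F, C.Infinite := by
  by_contra! h
  exact hinf (((finite_irreducibleComponentsOf hF).sUnion h).subset
    (subset_sUnion_irreducibleComponentsOf hF))

/-- Every component of `F` is the closure of the image of a component, and as there are only
finitely many components this forces the converse. -/
theorem mapsTo_closure_image_irreducibleComponentsOf {φ : X → X} (hφ : Continuous φ)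
    {F : Set X} (hF : IsClosed F) (hφF : closure (φ '' F) = F) :
    MapsTo (fun C => closure (φ '' C)) (irreducibleComponentsOf F)
      (irreducibleComponentsOf F) := by
  set S := irreducibleComponentsOf F
  have hSfin : S.Finite := finite_irreducibleComponentsOf hF
  have hcover : F ⊆ ⋃₀ ((fun C => closure (φ '' C)) '' S) := by
    calc F = closure (φ '' F) := hφF.symm
      _ ⊆ closure (φ '' ⋃₀ S) :=
        closure_mono (image_mono (subset_sUnion_irreducibleComponentsOf hF))
      _ = ⋃₀ ((fun C => closure (φ '' C)) '' S) := by
        rw [sUnion_image, ← hSfin.closure_biUnion, sUnion_eq_biUnion, image_iUnion₂]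
  refine SurjOn.mapsTo_of_finite hSfin fun C' hC' => ?_
  obtain ⟨hC'irr, hC'F, hC'max⟩ := mem_irreducibleComponentsOf_iff.mp hC'
  obtain ⟨_, ⟨C, hC, rfl⟩, hC'C⟩ := hC'irr.exists_subset_of_subset_sUnion (hSfin.image _)
    (forall_mem_image.mpr fun _ _ => isClosed_closure) (hC'F.trans hcover)
  obtain ⟨hCirr, hCF, -⟩ := mem_irreducibleComponentsOf_iff.mp hC
  have hφCF : closure (φ '' C) ⊆ F := hφF ▸ closure_mono (image_mono hCF)
  exact ⟨C, hC, hC'max _ (hCirr.image φ hφ.continuousOn).closure hφCF hC'C⟩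

end IrreducibleComponentsOf

section Dimension

variable {X : Type*} [TopologicalSpace X] [T1Space X]

theorem IsIrreducible.one_le_topologicalKrullDim {W : Set X} (hW : IsIrreducible W)
    (hW' : W.Nontrivial) : 1 ≤ topologicalKrullDim W := by
  obtain ⟨a, ha, b, hb, hab⟩ := hW'
  have := Subtype.irreducibleSpace hW
  let A : IrreducibleCloseds W := ⟨{⟨a, ha⟩}, isIrreducible_singleton, isClosed_singleton⟩
  let B : IrreducibleCloseds W := ⟨univ, IrreducibleSpace.isIrreducible_univ W, isClosed_univ⟩
  refine Order.one_le_krullDim_iff.mpr ⟨A, B, lt_of_le_of_ne (subset_univ _) fun h => hab ?_⟩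
  have hb' : (⟨b, hb⟩ : W) ∈ (A : Set W) := by rw [h]; trivial
  exact congrArg Subtype.val (eq_of_mem_singleton hb').symm

theorem Set.Finite.topologicalKrullDim_nonpos {W : Set X} (hW : W.Finite) :
    topologicalKrullDim W ≤ 0 :=
  have := hW.to_subtype
  topologicalKrullDim_zero_of_discreteTopology W

end Dimension

section OrbitTail

variable {α : Type*} (φ : α → α) (x : α)

def orbitTail (n : ℕ) : Set α := (fun k => φ^[k] x) '' Ici n

theorem image_orbitTail (n : ℕ) : φ '' orbitTail φ x n = orbitTail φ x (n + 1) := by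
  rw [orbitTail, orbitTail, image_image, ← image_add_const_Ici, image_image]
  simp only [iterate_succ_apply']

theorem orbitTail_antitone : Antitone (orbitTail φ x) :=
  fun _ _ h => image_mono (Ici_subset_Ici.mpr h)

theorem orbitTail_eq_union {n m : ℕ} (h : n ≤ m) :
    orbitTail φ x n = (fun k => φ^[k] x) '' Ico n m ∪ orbitTail φ x m := by
  rw [orbitTail, orbitTail, ← image_union, Ico_union_Ici_eq_Ici h]

theorem mapsTo_orbitTail (n : ℕ) : MapsTo φ (orbitTail φ x n) (orbitTail φ x n) :=
  mapsTo_iff_image_subset.mpr ((image_orbitTail φ x n).trans_subset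
    (orbitTail_antitone φ x n.le_succ))

variable {X : Type*} [TopologicalSpace X] {φ : X → X}

theorem exists_le_closure_image_closure_orbitTail [NoetherianSpace X] (hφ : Continuous φ)
    (x : X) (N : ℕ) : ∃ M, N ≤ M ∧
      closure (φ '' closure (orbitTail φ x M)) = closure (orbitTail φ x M) := by
  let c : ℕ → Closeds X := fun n => ⟨closure (orbitTail φ x n), isClosed_closure⟩
  obtain ⟨M, hM⟩ := WellFoundedLT.antitone_chain_condition (f := c)
    fun _ _ h => closure_mono (orbitTail_antitone φ x h)
  have hstable : ∀ m, M ≤ m → closure (orbitTail φ x m) = closure (orbitTail φ x M) :=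
    fun m hm => congrArg SetLike.coe (hM m hm).symm
  refine ⟨max N M, le_max_left N M, ?_⟩
  rw [closure_image_closure hφ, image_orbitTail, hstable _ (by omega),
    hstable (max N M) (le_max_right N M)]

theorem closure_orbitTail_eq_union [T1Space X] (x : X) {n m : ℕ} (h : n ≤ m) :
    closure (orbitTail φ x n) = (fun k => φ^[k] x) '' Ico n m ∪ closure (orbitTail φ x m) := by
  rw [orbitTail_eq_union φ x h, closure_union, ((finite_Ico n m).image _).isClosed.closure_eq]

end OrbitTail

theorem exists_closure_image_iterate_eq_of_mem_irreducibleComponentsOf {X : Type*}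
    [TopologicalSpace X] [NoetherianSpace X] {φ : X → X} (hφ : Continuous φ) {F C : Set X}
    (hF : IsClosed F) (hφF : closure (φ '' F) = F) (hC : C ∈ irreducibleComponentsOf F) :
    ∃ m m', m' < m ∧ closure (φ^[m] '' C) = closure (φ^[m'] '' C) := by
  have hmem : ∀ m, closure (φ^[m] '' C) ∈ irreducibleComponentsOf F := fun m => by
    rw [closure_image_iterate hφ, (isClosed_of_mem_irreducibleComponentsOf hF hC).closure_eq]
    exact (mapsTo_closure_image_irreducibleComponentsOf hφ hF hφF).iterate m hC
  obtain ⟨m', m, hlt, h⟩ :=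
    (finite_irreducibleComponentsOf hF).exists_lt_map_eq_of_forall_mem hmem
  exact ⟨m, m', hlt, h.symm⟩

/-- Let `φ : X → X` be a morphism of a variety (here: a continuous self-map
of a Noetherian T1 topological space, as is the Zariski topology on a variety over an
algebraically closed field), `x ∈ X` and `N ∈ ℕ`.  Let `Z` be the Zariski closure of
`{φ^k(x) : k ≥ N}` and let `Z'` be an irreducible component of `Z` of maximal dimension.
Then `Z'` is preperiodic under `φ`: there are `m > m' ≥ 0` with `φ^m(Z') = φ^{m'}(Z')`
(images taken up to Zariski closure). -/
theorem stmt9 (X : Type*) [TopologicalSpace X] [TopologicalSpace.NoetherianSpace X]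
    [T1Space X]
    (φ : X → X) (hφ : Continuous φ) (x : X) (N : ℕ)
    (Z : Set X) (hZ : Z = closure {y : X | ∃ k : ℕ, N ≤ k ∧ φ^[k] x = y})
    (Z' : Set X) (hirr : IsIrreducible Z') (hsub : Z' ⊆ Z)
    (hmax : ∀ W : Set X, IsIrreducible W → W ⊆ Z → Z' ⊆ W → W = Z')
    (hdim : ∀ W : Set X, IsIrreducible W → W ⊆ Z →
      (∀ W' : Set X, IsIrreducible W' → W' ⊆ Z → W ⊆ W' → W' = W) →
      topologicalKrullDim W ≤ topologicalKrullDim Z') :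
    ∃ m m' : ℕ, m' < m ∧ closure (φ^[m] '' Z') = closure (φ^[m'] '' Z') := by
  change Z = closure (orbitTail φ x N) at hZ
  have hZ' : Z' ∈ irreducibleComponentsOf Z :=
    mem_irreducibleComponentsOf_iff.mpr ⟨hirr, hsub, hmax⟩
  by_cases hZfin : Z.Finite
  · obtain ⟨m', m, hlt, h⟩ := hZfin.exists_lt_image_iterate_eq
      (hZ ▸ (mapsTo_orbitTail φ x N).closure hφ) hsub
    exact ⟨m, m', hlt, by rw [h]⟩
  have hZ'inf : Z'.Infinite := by
    obtain ⟨C, hC, hCinf⟩ :=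
      exists_infinite_mem_irreducibleComponentsOf (hZ ▸ isClosed_closure) hZfin
    obtain ⟨hCirr, hCZ, hCmax⟩ := mem_irreducibleComponentsOf_iff.mp hC
    have hdimZ' : 1 ≤ topologicalKrullDim Z' :=
      (hCirr.one_le_topologicalKrullDim hCinf.nontrivial).trans (hdim C hCirr hCZ hCmax)
    exact fun hfin => absurd (hdimZ'.trans hfin.topologicalKrullDim_nonpos) (by decide)
  obtain ⟨M, hNM, hφF⟩ := exists_le_closure_image_closure_orbitTail hφ x N
  have hZ'F : Z' ⊆ closure (orbitTail φ x M) := by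
    rw [hZ, closure_orbitTail_eq_union x hNM] at hsub
    refine (isPreirreducible_iff_isClosed_union_isClosed.mp hirr.2 _ _
      ((finite_Ico N M).image _).isClosed isClosed_closure hsub).resolve_left fun h => ?_
    exact hZ'inf (((finite_Ico N M).image _).subset h)
  have hFZ : closure (orbitTail φ x M) ⊆ Z := hZ ▸ closure_mono (orbitTail_antitone φ x hNM)
  exact exists_closure_image_iterate_eq_of_mem_irreducibleComponentsOf hφ isClosed_closure hφF
    (mem_irreducibleComponentsOf_of_subset hZ' hZ'F hFZ)
end
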